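/- Fix x ∈ ℝⁿ and 1 < K < n. With s(x)ᵢ = (Σ_{j=i}ⁿ |x|_[j])/(K−i+1), let i_x be the smallest minimizer of s(x)ᵢ over i ∈ {1,...,K}, δ(x) = s(x)_{i_x}, and define u(x) by u(x)ᵢ = |x|_[i] for i < i_x, u(x)ᵢ = δ(x) for i_x ≤ i ≤ K, u(x)ᵢ = 0 for i > K. Then u(x) is nonincreasing and u(x) majorizes |x|. -/

import Mathlib

open Finset

/-- The `i`-th largest entry (0-indexed) of the tuple `x`. -/
noncomputable def sortedDesc (n : ℕ) (x : Fin n → ℝ) : Fin n → ℝ :=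
  fun i => x (Tuple.sort x i.rev)

/-- Sum of the `k` largest entries of `x`. -/
noncomputable def topSum (n : ℕ) (x : Fin n → ℝ) (k : ℕ) : ℝ :=
  ∑ i ∈ Finset.univ.filter (fun i : Fin n => (i : ℕ) < k), sortedDesc n x i

/-- `u` majorizes `x`. -/
def Majorizes (n : ℕ) (u x : Fin n → ℝ) : Prop :=
  (∀ k, k < n → topSum n x k ≤ topSum n u k) ∧ (∑ i, x i = ∑ i, u i)

/-- `u` weakly submajorizes `x`. -/
def WeakSubmajorizes (n : ℕ) (u x : Fin n → ℝ) : Prop :=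
  ∀ k, k ≤ n → topSum n x k ≤ topSum n u k

/-- Number of nonzero components. -/
noncomputable def suppCard (n : ℕ) (x : Fin n → ℝ) : ℕ :=
  (Finset.univ.filter (fun i => x i ≠ 0)).card

/-!
Write `a` for the decreasing rearrangement of `|x|` and `δ = δ(x)`. By the definition of `δ` the
tail sums `∑_{j ≥ i_x} a_j` and `∑_{j ≥ i_x} u_j` agree, so `u` and `a` have the same total. For
`i ≥ i_x`, minimality `s(x)_i ≥ δ` says `∑_{j ≥ i} a_j ≥ (K - i + 1) δ`, which is the tail sum of `u`
from `i` (the tail of `u` vanishes beyond `K`); with equal totals, this domination of tail sums is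
the domination of prefix sums required for majorization. Monotonicity of `u` reduces to
`δ ≤ a_{i_x - 1}`, which holds because `s(x)_{i_x - 1}` is a weighted average of `a_{i_x - 1}` and
`δ` and is not below `δ`.
-/

section FinSums

variable {M : Type*} [AddCommMonoid M] {n : ℕ}

theorem Fin.sum_filter_eq_sum_filter_range (f : ℕ → M) (p : ℕ → Prop) [DecidablePred p] :
    ∑ j ∈ univ.filter (fun j : Fin n => p j), f j = ∑ j ∈ (range n).filter p, f j := by
  rw [sum_filter, sum_filter, Fin.sum_univ_eq_sum_range (fun m => if p m then f m else 0)]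

theorem Fin.sum_filter_le_eq_sum_Ico (f : ℕ → M) (k : ℕ) :
    ∑ j ∈ univ.filter (fun j : Fin n => k ≤ j), f j = ∑ j ∈ Ico k n, f j := by
  rw [Fin.sum_filter_eq_sum_filter_range f (k ≤ ·)]
  congr 1
  ext j
  simp only [mem_filter, mem_range, mem_Ico]
  omega

theorem Fin.sum_filter_lt_eq_sum_range (f : ℕ → M) {k : ℕ} (hk : k ≤ n) :
    ∑ j ∈ univ.filter (fun j : Fin n => j < k), f j = ∑ j ∈ range k, f j := by
  rw [Fin.sum_filter_eq_sum_filter_range f (· < k)]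
  congr 1
  ext j
  simp only [mem_filter, mem_range]
  omega

end FinSums

section ZeroExtend

variable {M : Type*} [Zero M] {n : ℕ}

def zeroExtend (f : Fin n → M) (m : ℕ) : M :=
  if h : m < n then f ⟨m, h⟩ else 0

@[simp]
theorem zeroExtend_val (f : Fin n → M) (i : Fin n) : zeroExtend f i = f i := by
  simp [zeroExtend]

variable [Preorder M] {f : Fin n → M}

theorem zeroExtend_nonneg (hf : ∀ i, 0 ≤ f i) (m : ℕ) : 0 ≤ zeroExtend f m := by
  unfold zeroExtend
  split_ifs
  exacts [hf _, le_rfl]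

theorem antitone_zeroExtend (hf : Antitone f) (hf0 : ∀ i, 0 ≤ f i) : Antitone (zeroExtend f) := by
  intro p q hpq
  unfold zeroExtend
  split_ifs with hq hp
  · exact hf (Fin.mk_le_mk.mpr hpq)
  · omega
  · exact hf0 _
  · exact le_rfl

end ZeroExtend

section Majorization

variable {n : ℕ}

theorem sortedDesc_antitone (x : Fin n → ℝ) : Antitone (sortedDesc n x) :=
  fun _ _ hij => Tuple.monotone_sort x (Fin.rev_le_rev.mpr hij)

theorem sortedDesc_eq_self {u : Fin n → ℝ} (hu : Antitone u) : sortedDesc n u = u := by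
  have hsort : u ∘ Fin.revPerm = u ∘ Tuple.sort u :=
    Tuple.comp_sort_eq_comp_iff_monotone.mpr fun i j hij => hu (Fin.rev_le_rev.mpr hij)
  funext i
  simpa [sortedDesc] using (congrFun hsort i.rev).symm

theorem sum_sortedDesc (x : Fin n → ℝ) : ∑ i, sortedDesc n x i = ∑ i, x i :=
  Equiv.sum_comp (Fin.revPerm.trans (Tuple.sort x)) x

theorem topSum_eq_sum_range {x : Fin n → ℝ} {f : ℕ → ℝ} (hf : ∀ i, sortedDesc n x i = f i)
    {k : ℕ} (hk : k ≤ n) : topSum n x k = ∑ j ∈ range k, f j := by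
  unfold topSum
  simp_rw [hf]
  exact Fin.sum_filter_lt_eq_sum_range f hk

theorem majorizes_of_sum_range_le {u x : Fin n → ℝ} {f g : ℕ → ℝ} (hu : Antitone u)
    (hug : ∀ i : Fin n, u i = g i) (hxf : ∀ i : Fin n, sortedDesc n x i = f i)
    (hle : ∀ k ≤ n, ∑ j ∈ range k, f j ≤ ∑ j ∈ range k, g j)
    (htot : ∑ j ∈ range n, f j = ∑ j ∈ range n, g j) : Majorizes n u x := by
  have hug' : ∀ i, sortedDesc n u i = g i := by simpa [sortedDesc_eq_self hu] using hug
  refine ⟨fun k hk => ?_, ?_⟩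
  · rw [topSum_eq_sum_range hxf hk.le, topSum_eq_sum_range hug' hk.le]
    exact hle k hk.le
  · rw [← sum_sortedDesc x, ← sum_sortedDesc u]
    simpa only [hxf, hug', Fin.sum_univ_eq_sum_range] using htot

end Majorization

theorem sum_range_le_of_sum_Ico_le {M : Type*} [AddCommGroup M] [PartialOrder M]
    [IsOrderedAddMonoid M] {f g : ℕ → M} {n k : ℕ}
    (htot : ∑ j ∈ range n, f j = ∑ j ∈ range n, g j)
    (htail : ∑ j ∈ Ico k n, g j ≤ ∑ j ∈ Ico k n, f j) (hk : k ≤ n) :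
    ∑ j ∈ range k, f j ≤ ∑ j ∈ range k, g j := by
  refine le_of_add_le_add_right (a := ∑ j ∈ Ico k n, f j) ?_
  calc ∑ j ∈ range k, f j + ∑ j ∈ Ico k n, f j = ∑ j ∈ range k, g j + ∑ j ∈ Ico k n, g j := by
        rw [sum_range_add_sum_Ico f hk, sum_range_add_sum_Ico g hk, htot]
    _ ≤ ∑ j ∈ range k, g j + ∑ j ∈ Ico k n, f j := add_le_add_right htail _

section FlattenTail

variable {a : ℕ → ℝ} {n c K k : ℕ} {δ : ℝ}

/-- For `a` the decreasing rearrangement of `|x|`, `tailAvg a n K k` is the paper's `s(x)_{k+1}`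
(indices here start at `0`). -/
noncomputable def tailAvg (a : ℕ → ℝ) (n K k : ℕ) : ℝ :=
  (∑ j ∈ Ico k n, a j) / (K - k)

theorem mul_tailAvg (hk : k < K) : (K - k : ℝ) * tailAvg a n K k = ∑ j ∈ Ico k n, a j := by
  have : (0 : ℝ) < K - k := sub_pos.mpr (by exact_mod_cast hk)
  rw [tailAvg, mul_div_cancel₀ _ this.ne']

theorem tailAvg_nonneg (ha0 : ∀ m, 0 ≤ a m) (hk : k ≤ K) : 0 ≤ tailAvg a n K k :=
  div_nonneg (sum_nonneg fun j _ => ha0 j) (sub_nonneg.mpr (by exact_mod_cast hk))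

theorem tailAvg_le_of_tailAvg_succ_le (hkn : k < n) (hkK : k + 1 < K)
    (h : tailAvg a n K (k + 1) ≤ tailAvg a n K k) : tailAvg a n K (k + 1) ≤ a k := by
  -- `tailAvg a n K k` is the average of `a k` and `K - k - 1` copies of `tailAvg a n K (k + 1)`.
  have hk := mul_tailAvg (a := a) (n := n) (by omega : k < K)
  have hk1 := mul_tailAvg (a := a) (n := n) hkK
  rw [sum_eq_sum_Ico_succ_bot hkn, ← hk1] at hk
  push_cast at hk
  have hpos : (0 : ℝ) ≤ K - k := sub_nonneg.mpr (by exact_mod_cast (by omega : k ≤ K))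
  nlinarith [mul_le_mul_of_nonneg_left h hpos]

/-- The paper's `u(x)` is `flattenTail a (i_x - 1) K δ(x)`, read on `Fin n`. -/
def flattenTail (a : ℕ → ℝ) (c K : ℕ) (δ : ℝ) (m : ℕ) : ℝ :=
  if m < c then a m else if m < K then δ else 0

theorem flattenTail_antitone (ha : Antitone a) (hδ : 0 ≤ δ) (hδa : ∀ m < c, δ ≤ a m) :
    Antitone (flattenTail a c K δ) := by
  intro i j hij
  unfold flattenTail
  split_ifs <;> first
    | omega | exact ha hij | exact le_rfl | exact hδ | exact hδa _ ‹_›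
    | exact hδ.trans (hδa _ ‹_›)

theorem sum_Ico_flattenTail_eq_mul (hck : c ≤ k) (hKn : K ≤ n) :
    ∑ j ∈ Ico k n, flattenTail a c K δ j = ((K - k : ℕ) : ℝ) * δ := by
  have hfilter : (Ico k n).filter (· < K) = Ico k K := by
    ext j
    simp only [mem_filter, mem_Ico]
    omega
  calc ∑ j ∈ Ico k n, flattenTail a c K δ j = ∑ j ∈ Ico k n, if j < K then δ else 0 := by
        refine sum_congr rfl fun j hj => ?_
        rw [flattenTail, if_neg (by simp only [mem_Ico] at hj; omega)]
    _ = ((K - k : ℕ) : ℝ) * δ := by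
        rw [← sum_filter, hfilter, sum_const, Nat.card_Ico, nsmul_eq_mul]

theorem flattenTail_tailAvg_antitone (ha : Antitone a) (ha0 : ∀ m, 0 ≤ a m) (hcK : c < K)
    (hcn : c ≤ n) (hleast : ∀ k < c, tailAvg a n K c ≤ tailAvg a n K k) :
    Antitone (flattenTail a c K (tailAvg a n K c)) := by
  refine flattenTail_antitone ha (tailAvg_nonneg ha0 hcK.le) fun m hm => ?_
  obtain ⟨d, rfl⟩ : ∃ d, c = d + 1 := ⟨c - 1, by omega⟩
  exact (tailAvg_le_of_tailAvg_succ_le (by omega) hcK (hleast d (by omega))).trans (ha (by omega))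

theorem sum_Ico_flattenTail_eq_sum_Ico (hcK : c < K) (hKn : K ≤ n) (hkc : k ≤ c) :
    ∑ j ∈ Ico k n, flattenTail a c K (tailAvg a n K c) j = ∑ j ∈ Ico k n, a j := by
  rw [← sum_Ico_consecutive _ hkc (by omega), ← sum_Ico_consecutive a hkc (by omega),
    sum_Ico_flattenTail_eq_mul le_rfl hKn, ← mul_tailAvg hcK, Nat.cast_sub hcK.le]
  congr 1
  exact sum_congr rfl fun j hj => if_pos (mem_Ico.mp hj).2

theorem sum_range_flattenTail (hcK : c < K) (hKn : K ≤ n) :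
    ∑ j ∈ range n, flattenTail a c K (tailAvg a n K c) j = ∑ j ∈ range n, a j := by
  simpa only [range_eq_Ico] using sum_Ico_flattenTail_eq_sum_Ico hcK hKn (Nat.zero_le c)

theorem sum_Ico_flattenTail_le (hcK : c < K) (hKn : K ≤ n) (ha0 : ∀ m, 0 ≤ a m)
    (hmin : ∀ k, c ≤ k → k < K → tailAvg a n K c ≤ tailAvg a n K k) (k : ℕ) :
    ∑ j ∈ Ico k n, flattenTail a c K (tailAvg a n K c) j ≤ ∑ j ∈ Ico k n, a j := by
  rcases le_total k c with hkc | hck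
  · exact (sum_Ico_flattenTail_eq_sum_Ico hcK hKn hkc).le
  rw [sum_Ico_flattenTail_eq_mul hck hKn]
  rcases lt_or_ge k K with hkK | hKk
  · rw [Nat.cast_sub hkK.le, ← mul_tailAvg hkK]
    exact mul_le_mul_of_nonneg_left (hmin k hck hkK) (sub_nonneg.mpr (by exact_mod_cast hkK.le))
  · rw [Nat.sub_eq_zero_of_le hKk, Nat.cast_zero, zero_mul]
    exact sum_nonneg fun j _ => ha0 j

theorem sum_range_le_sum_range_flattenTail (hcK : c < K) (hKn : K ≤ n) (ha0 : ∀ m, 0 ≤ a m)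
    (hmin : ∀ k, c ≤ k → k < K → tailAvg a n K c ≤ tailAvg a n K k) (hk : k ≤ n) :
    ∑ j ∈ range k, a j ≤ ∑ j ∈ range k, flattenTail a c K (tailAvg a n K c) j :=
  sum_range_le_of_sum_Ico_le (sum_range_flattenTail hcK hKn).symm
    (sum_Ico_flattenTail_le hcK hKn ha0 hmin k) hk

end FlattenTail

theorem ux_antitone_and_majorizes_general (n K : ℕ) (hKn : K < n) (x : Fin n → ℝ)
    (s : ℕ → ℝ)
    (hs : ∀ i : ℕ, s i =
      (∑ j ∈ Finset.univ.filter (fun j : Fin n => i ≤ (j : ℕ) + 1),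
        sortedDesc n (fun t => |x t|) j) / ((K : ℝ) - i + 1))
    (ix : ℕ) (hix1 : 1 ≤ ix) (hix2 : ix ≤ K)
    (hmin : ∀ j, 1 ≤ j → j ≤ K → s ix ≤ s j)
    (hleast : ∀ j, 1 ≤ j → j < ix → s ix < s j)
    (u : Fin n → ℝ)
    (hu : ∀ i : Fin n, u i =
      if (i : ℕ) + 1 < ix then sortedDesc n (fun t => |x t|) i
      else if (i : ℕ) + 1 ≤ K then s ix else 0) :
    Antitone u ∧ Majorizes n u (fun t => |x t|) := by
  obtain ⟨c, rfl⟩ : ∃ c, ix = c + 1 := ⟨ix - 1, by omega⟩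
  set a := zeroExtend (sortedDesc n fun t => |x t|)
  have ha0 : ∀ m, 0 ≤ a m := zeroExtend_nonneg fun _ => abs_nonneg _
  have ha : Antitone a := antitone_zeroExtend (sortedDesc_antitone _) fun _ => abs_nonneg _
  have hsorted : ∀ j : Fin n, sortedDesc n (fun t => |x t|) j = a j :=
    fun j => (zeroExtend_val _ j).symm
  have hsa : ∀ k, s (k + 1) = tailAvg a n K k := fun k => by
    simp only [hs, tailAvg, hsorted, Nat.add_le_add_iff_right, Fin.sum_filter_le_eq_sum_Ico]
    push_cast
    ring_nf
  have hmin' : ∀ k, c ≤ k → k < K → tailAvg a n K c ≤ tailAvg a n K k :=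
    fun k _ hk => by simpa only [hsa] using hmin (k + 1) (by omega) (by omega)
  have hleast' : ∀ k < c, tailAvg a n K c ≤ tailAvg a n K k :=
    fun k hk => by simpa only [hsa] using (hleast (k + 1) (by omega) (by omega)).le
  have huv : ∀ i : Fin n, u i = flattenTail a c K (tailAvg a n K c) i := fun i => by
    simp only [hu, hsa, flattenTail, a, zeroExtend_val, Nat.add_lt_add_iff_right,
      Nat.add_one_le_iff]
  have hanti : Antitone u := fun i j hij => by
    simpa only [huv] using flattenTail_tailAvg_antitone ha ha0 (by omega) (by omega) hleast' hij
  exact ⟨hanti, majorizes_of_sum_range_le hanti huv hsorted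
    (fun k => sum_range_le_sum_range_flattenTail (by omega) hKn.le ha0 hmin')
    (sum_range_flattenTail (by omega) hKn.le).symm⟩

theorem ux_antitone_and_majorizes (n K : ℕ) (hK1 : 1 < K) (hKn : K < n) (x : Fin n → ℝ)
    (s : ℕ → ℝ)
    (hs : ∀ i : ℕ, s i =
      (∑ j ∈ Finset.univ.filter (fun j : Fin n => i ≤ (j : ℕ) + 1),
        sortedDesc n (fun t => |x t|) j) / ((K : ℝ) - i + 1))
    (ix : ℕ) (hix1 : 1 ≤ ix) (hix2 : ix ≤ K)
    (hmin : ∀ j, 1 ≤ j → j ≤ K → s ix ≤ s j)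
    (hleast : ∀ j, 1 ≤ j → j < ix → s ix < s j)
    (u : Fin n → ℝ)
    (hu : ∀ i : Fin n, u i =
      if (i : ℕ) + 1 < ix then sortedDesc n (fun t => |x t|) i
      else if (i : ℕ) + 1 ≤ K then s ix else 0) :
    Antitone u ∧ Majorizes n u (fun t => |x t|) :=
  ux_antitone_and_majorizes_general n K hKn x s hs ix hix1 hix2 hmin hleast u hu
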